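/- Let G be a weighted bipartite graph and w* a weight threshold. Define G_{≥w*} as the subgraph of G with edges of weight ≥ w*. Then the significant (α,β)-community of q has weight ≥ w* if and only if q belongs to some connected subgraph of G_{≥w*} satisfying the (α,β) degree constraints, which happens if and only if q is in the (α,β)-core of G_{≥w*}. -/

import Mathlib

variable {V : Type*}

/-- Upper-layer vertices of an (edge-set) bipartite subgraph. -/
def upperVerts [DecidableEq V] (S : Finset (V × V)) : Finset V := S.image Prod.fst

/-- Lower-layer vertices. -/
def lowerVerts [DecidableEq V] (S : Finset (V × V)) : Finset V := S.image Prod.snd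

/-- All vertices. -/
def bverts [DecidableEq V] (S : Finset (V × V)) : Finset V := upperVerts S ∪ lowerVerts S

/-- Degree of an upper vertex. -/
def updeg [DecidableEq V] (S : Finset (V × V)) (u : V) : ℕ :=
  (S.filter (fun e => e.1 = u)).card

/-- Degree of a lower vertex. -/
def lowdeg [DecidableEq V] (S : Finset (V × V)) (v : V) : ℕ :=
  (S.filter (fun e => e.2 = v)).card

/-- The (α,β) degree constraint. -/
def DegConstr [DecidableEq V] (α β : ℕ) (S : Finset (V × V)) : Prop :=
  (∀ u ∈ upperVerts S, α ≤ updeg S u) ∧ (∀ v ∈ lowerVerts S, β ≤ lowdeg S v)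

/-- Adjacency relation induced by the edge set. -/
def adjRel (S : Finset (V × V)) (a b : V) : Prop := (a, b) ∈ S ∨ (b, a) ∈ S

/-- Connectivity of an edge-set subgraph. -/
def Conn [DecidableEq V] (S : Finset (V × V)) : Prop :=
  ∀ a ∈ bverts S, ∀ b ∈ bverts S, Relation.ReflTransGen (adjRel S) a b

/-- `C` is the (α,β)-core of the bipartite graph with edge set `E`:
it is a subgraph satisfying the degree constraints that contains every
subgraph of `E` satisfying the constraints (hence it is maximal). -/
def IsCore [DecidableEq V] (E : Finset (V × V)) (α β : ℕ) (C : Finset (V × V)) : Prop :=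
  C ⊆ E ∧ DegConstr α β C ∧ ∀ S ⊆ E, DegConstr α β S → S ⊆ C

/-- `C` is the (α,β)-community of `q`: the maximal connected subgraph of the
core `Ecore` containing `q`. -/
def IsCommunity [DecidableEq V] (Ecore : Finset (V × V)) (q : V) (C : Finset (V × V)) : Prop :=
  C ⊆ Ecore ∧ Conn C ∧ q ∈ bverts C ∧ ∀ S ⊆ Ecore, Conn S → q ∈ bverts S → S ⊆ C

/-- `S` is the significant (α,β)-community of `q` inside the (α,β)-community `K`:
connected, contains `q`, satisfies the degree constraints, maximizes the minimum
edge weight `Finset.inf w`, and no proper supergraph with the same properties has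
equal weight. -/
def IsSigCom [DecidableEq V] (K : Finset (V × V)) (α β : ℕ) (q : V) (w : V × V → ENNReal)
    (S : Finset (V × V)) : Prop :=
  S ⊆ K ∧ Conn S ∧ q ∈ bverts S ∧ DegConstr α β S ∧
  (∀ S' ⊆ K, Conn S' → q ∈ bverts S' → DegConstr α β S' → S'.inf w ≤ S.inf w) ∧
  (∀ S', S ⊂ S' → S' ⊆ K → Conn S' → q ∈ bverts S' → DegConstr α β S' → S'.inf w ≠ S.inf w)

/-- The α-offset of `u`: the maximal `β` such that `u` is in the (α,β)-core. -/
noncomputable def saOff [DecidableEq V] (E : Finset (V × V)) (u : V) (α : ℕ) : ℕ :=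
  sSup {b | ∃ C, IsCore E α b C ∧ u ∈ bverts C}

/-!
If `f(S) ≥ w*`, then `S` itself lies in `G_{≥w*}`. Conversely, a connected subgraph `T` of
`G_{≥w*}` containing `q` and satisfying the constraints lies in the core `C` of `G` and hence in
the community `K`, so the optimality of `S` gives `w* ≤ f(T) ≤ f(S)`. The core of any graph
exists because the degree constraints are preserved by unions; conversely, the edges reachable
from `q` inside a core form a connected subgraph that still satisfies the constraints, since it
keeps every edge at each of its vertices.
-/

instance (S : Finset (V × V)) : Std.Symm (adjRel S) where
  symm _ _ h := h.symm

theorem reflTransGen_fst_iff_snd {S : Finset (V × V)} {q : V} {e : V × V} (he : e ∈ S) :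
    Relation.ReflTransGen (adjRel S) q e.1 ↔ Relation.ReflTransGen (adjRel S) q e.2 :=
  ⟨fun h => h.tail (Or.inl he), fun h => h.tail (Or.inr he)⟩

open Classical in
noncomputable def edgeComponent (S : Finset (V × V)) (q : V) : Finset (V × V) :=
  S.filter fun e => Relation.ReflTransGen (adjRel S) q e.1

section edgeComponent

variable {S : Finset (V × V)} {q : V}

theorem mem_edgeComponent {e : V × V} :
    e ∈ edgeComponent S q ↔ e ∈ S ∧ Relation.ReflTransGen (adjRel S) q e.1 := by
  classical
  exact Finset.mem_filter

theorem edgeComponent_subset : edgeComponent S q ⊆ S :=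
  fun _ he => (mem_edgeComponent.1 he).1

theorem reflTransGen_edgeComponent {a : V} (h : Relation.ReflTransGen (adjRel S) q a) :
    Relation.ReflTransGen (adjRel (edgeComponent S q)) q a := by
  induction h with
  | refl => exact .refl
  | @tail b c hqb hbc ih =>
    refine ih.tail ?_
    rcases hbc with hbc | hcb
    · exact .inl (mem_edgeComponent.2 ⟨hbc, hqb⟩)
    · exact .inr (mem_edgeComponent.2 ⟨hcb, hqb.tail (.inr hcb)⟩)

end edgeComponent

section

variable [DecidableEq V]

theorem mem_bverts {S : Finset (V × V)} {a : V} :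
    a ∈ bverts S ↔ ∃ e ∈ S, e.1 = a ∨ e.2 = a := by
  simp only [bverts, upperVerts, lowerVerts, Finset.mem_union, Finset.mem_image]
  aesop

theorem bverts_mono {S T : Finset (V × V)} (h : S ⊆ T) : bverts S ⊆ bverts T := by
  intro a ha
  obtain ⟨e, he, hea⟩ := mem_bverts.1 ha
  exact mem_bverts.2 ⟨e, h he, hea⟩

theorem updeg_mono {S T : Finset (V × V)} (h : S ⊆ T) (u : V) : updeg S u ≤ updeg T u :=
  Finset.card_le_card (Finset.filter_subset_filter _ h)

theorem lowdeg_mono {S T : Finset (V × V)} (h : S ⊆ T) (v : V) : lowdeg S v ≤ lowdeg T v :=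
  Finset.card_le_card (Finset.filter_subset_filter _ h)

theorem degConstr_empty (α β : ℕ) : DegConstr α β (∅ : Finset (V × V)) := by
  simp [DegConstr, upperVerts, lowerVerts]

theorem DegConstr.union {α β : ℕ} {S T : Finset (V × V)} (hS : DegConstr α β S)
    (hT : DegConstr α β T) : DegConstr α β (S ∪ T) := by
  constructor
  · intro u hu
    rw [upperVerts, Finset.image_union, Finset.mem_union] at hu
    rcases hu with hu | hu
    · exact (hS.1 u hu).trans (updeg_mono Finset.subset_union_left u)
    · exact (hT.1 u hu).trans (updeg_mono Finset.subset_union_right u)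
  · intro v hv
    rw [lowerVerts, Finset.image_union, Finset.mem_union] at hv
    rcases hv with hv | hv
    · exact (hS.2 v hv).trans (lowdeg_mono Finset.subset_union_left v)
    · exact (hT.2 v hv).trans (lowdeg_mono Finset.subset_union_right v)

theorem DegConstr.of_subset_of_closed {α β : ℕ} {S T : Finset (V × V)} (hS : DegConstr α β S)
    (hTS : T ⊆ S) (hup : ∀ e ∈ S, e.1 ∈ upperVerts T → e ∈ T)
    (hlow : ∀ e ∈ S, e.2 ∈ lowerVerts T → e ∈ T) : DegConstr α β T := by
  constructor
  · intro u hu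
    refine (hS.1 u (Finset.image_subset_image hTS hu)).trans (Finset.card_le_card ?_)
    intro e he
    obtain ⟨heS, rfl⟩ := Finset.mem_filter.1 he
    exact Finset.mem_filter.2 ⟨hup e heS hu, rfl⟩
  · intro v hv
    refine (hS.2 v (Finset.image_subset_image hTS hv)).trans (Finset.card_le_card ?_)
    intro e he
    obtain ⟨heS, rfl⟩ := Finset.mem_filter.1 he
    exact Finset.mem_filter.2 ⟨hlow e heS hv, rfl⟩

theorem exists_isCore (E : Finset (V × V)) (α β : ℕ) : ∃ C, IsCore E α β C := by
  classical
  set good := E.powerset.filter (DegConstr α β)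
  have mem_good {S : Finset (V × V)} : S ∈ good ↔ S ⊆ E ∧ DegConstr α β S := by
    simp [good]
  refine ⟨good.sup id, ?_, ?_, fun S hSE hS => Finset.le_sup (f := id) (mem_good.2 ⟨hSE, hS⟩)⟩
  · exact Finset.sup_le fun S hS => (mem_good.1 hS).1
  · exact Finset.sup_induction (degConstr_empty α β) (fun _ h₁ _ h₂ => h₁.union h₂)
      fun S hS => (mem_good.1 hS).2

section edgeComponent

variable {S : Finset (V × V)} {q : V}

theorem mem_bverts_edgeComponent {a : V} :
    a ∈ bverts (edgeComponent S q) ↔ a ∈ bverts S ∧ Relation.ReflTransGen (adjRel S) q a := by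
  simp only [mem_bverts, mem_edgeComponent]
  constructor
  · rintro ⟨e, ⟨heS, hreach⟩, rfl | rfl⟩
    · exact ⟨⟨e, heS, .inl rfl⟩, hreach⟩
    · exact ⟨⟨e, heS, .inr rfl⟩, (reflTransGen_fst_iff_snd heS).1 hreach⟩
  · rintro ⟨⟨e, heS, rfl | rfl⟩, hreach⟩
    · exact ⟨e, ⟨heS, hreach⟩, .inl rfl⟩
    · exact ⟨e, ⟨heS, (reflTransGen_fst_iff_snd heS).2 hreach⟩, .inr rfl⟩

theorem conn_edgeComponent : Conn (edgeComponent S q) := by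
  intro a ha b hb
  have hqa := reflTransGen_edgeComponent (mem_bverts_edgeComponent.1 ha).2
  have hqb := reflTransGen_edgeComponent (mem_bverts_edgeComponent.1 hb).2
  exact (symm_of _ hqa).trans hqb

theorem degConstr_edgeComponent {α β : ℕ} (hS : DegConstr α β S) :
    DegConstr α β (edgeComponent S q) := by
  have reach_of_mem {a : V} (ha : a ∈ bverts (edgeComponent S q)) :=
    (mem_bverts_edgeComponent.1 ha).2
  refine hS.of_subset_of_closed edgeComponent_subset (fun e heS he => ?_) (fun e heS he => ?_)
  · exact mem_edgeComponent.2 ⟨heS, reach_of_mem (Finset.mem_union_left _ he)⟩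
  · exact mem_edgeComponent.2
      ⟨heS, (reflTransGen_fst_iff_snd heS).2 (reach_of_mem (Finset.mem_union_right _ he))⟩

end edgeComponent

theorem exists_conn_degConstr_iff_mem_core {E : Finset (V × V)} {α β : ℕ} {q : V} :
    (∃ T ⊆ E, Conn T ∧ q ∈ bverts T ∧ DegConstr α β T) ↔
      ∃ C, IsCore E α β C ∧ q ∈ bverts C := by
  constructor
  · rintro ⟨T, hTE, -, hqT, hT⟩
    obtain ⟨C, hC⟩ := exists_isCore E α β
    exact ⟨C, hC, bverts_mono (hC.2.2 T hTE hT) hqT⟩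
  · rintro ⟨C, ⟨hCE, hC, -⟩, hqC⟩
    exact ⟨edgeComponent C q, edgeComponent_subset.trans hCE, conn_edgeComponent,
      mem_bverts_edgeComponent.2 ⟨hqC, .refl⟩, degConstr_edgeComponent hC⟩

end

/-- f(SC) ≥ w* iff q belongs to some connected subgraph of
G_{≥w*} satisfying the degree constraints, iff q is in the (α,β)-core of
G_{≥w*}. -/
theorem threshold_iff [DecidableEq V] (E : Finset (V × V)) (α β : ℕ) (q : V)
    (w : V × V → ENNReal) (wstar : ENNReal) (C K S : Finset (V × V))
    (hC : IsCore E α β C) (hK : IsCommunity C q K) (hS : IsSigCom K α β q w S)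
    (Ew : Finset (V × V)) (hEw : ∀ e, e ∈ Ew ↔ e ∈ E ∧ wstar ≤ w e) :
    (wstar ≤ S.inf w ↔
        ∃ T ⊆ Ew, Conn T ∧ q ∈ bverts T ∧ DegConstr α β T) ∧
      ((∃ T ⊆ Ew, Conn T ∧ q ∈ bverts T ∧ DegConstr α β T) ↔
        ∃ Cw, IsCore Ew α β Cw ∧ q ∈ bverts Cw) := by
  obtain ⟨hCE, -, hCmax⟩ := hC
  obtain ⟨hKC, -, -, hKmax⟩ := hK
  obtain ⟨hSK, hSconn, hqS, hSdeg, hSopt, -⟩ := hS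
  refine ⟨⟨fun hw => ⟨S, fun e he => ?_, hSconn, hqS, hSdeg⟩, ?_⟩,
    exists_conn_degConstr_iff_mem_core⟩
  · exact (hEw e).2 ⟨hCE (hKC (hSK he)), hw.trans (Finset.inf_le he)⟩
  · rintro ⟨T, hTEw, hTconn, hqT, hTdeg⟩
    have hTE : T ⊆ E := fun e he => ((hEw e).1 (hTEw he)).1
    have hTK : T ⊆ K := hKmax T (hCmax T hTE hTdeg) hTconn hqT
    calc wstar ≤ T.inf w := Finset.le_inf fun e he => ((hEw e).1 (hTEw he)).2
      _ ≤ S.inf w := hSopt T hTK hTconn hqT hTdeg
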